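/- Let G be a finite group and k a commutative ring. The map ρ: xB_k(G) → Z(kG) sending a basis element (H, a) to Σ_{[x] ∈ G/H} x a x⁻¹ (sum over left coset representatives) is a well-defined surjective homomorphism of k-algebras onto the center of the group algebra kG. -/

import Mathlib

namespace CrossedBurnside

variable {G : Type} [Group G]

/-- Pairs `(H, a)` with `H ≤ G` and `a ∈ C_G(H)`. -/
def CPair (G : Type) [Group G] : Type :=
  {p : Subgroup G × G // p.2 ∈ Subgroup.centralizer (p.1 : Set G)}

/-- Simultaneous conjugation relation on pairs: `(H,a) ~ (xHx⁻¹, xax⁻¹)`. -/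
def conjRel (p q : CPair G) : Prop :=
  ∃ x : G, Subgroup.map (MulAut.conj x).toMonoidHom p.1.1 = q.1.1 ∧
    x * p.1.2 * x⁻¹ = q.1.2

/-- The underlying `k`-module of the crossed Burnside algebra: the free `k`-module
on `G`-conjugacy classes of pairs `(H, a)` with `a ∈ C_G(H)`. -/
abbrev XB (k G : Type) [CommRing k] [Group G] : Type :=
  Quot (conjRel (G := G)) →₀ k

theorem centralizer_aux {K H : Subgroup G} {b a g : G}
    (hb : b ∈ Subgroup.centralizer (K : Set G))
    (ha : a ∈ Subgroup.centralizer (H : Set G)) :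
    b * (g * a * g⁻¹) ∈
      Subgroup.centralizer
        ((K ⊓ Subgroup.map (MulAut.conj g).toMonoidHom H : Subgroup G) : Set G) := by
  intro u hu
  obtain ⟨huK, huH⟩ := hu
  obtain ⟨h, hh, he⟩ := huH
  have h1 : u * b = b * u := hb u huK
  have h2 : h * a = a * h := ha h hh
  have hu' : u = g * h * g⁻¹ := by simpa [MulAut.conj] using he.symm
  have h3 : u * (g * a * g⁻¹) = (g * a * g⁻¹) * u := by
    rw [hu']
    calc g * h * g⁻¹ * (g * a * g⁻¹) = g * (h * a) * g⁻¹ := by group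
    _ = g * (a * h) * g⁻¹ := by rw [h2]
    _ = g * a * g⁻¹ * (g * h * g⁻¹) := by group
  rw [← mul_assoc, h1, mul_assoc, h3, ← mul_assoc]

theorem one_mem_centralizer_top :
    (1 : G) ∈ Subgroup.centralizer ((⊤ : Subgroup G) : Set G) := by
  intro u _; simp


variable {k : Type} [CommRing k]

/-- The basis element of `XB k G` given by a pair `(H, a)` with `a ∈ C_G(H)`. -/
noncomputable def basisElt (k : Type) [CommRing k] (H : Subgroup G) (a : G)
    (ha : a ∈ Subgroup.centralizer (H : Set G)) : XB k G :=
  Finsupp.single (Quot.mk (conjRel (G := G)) ⟨(H, a), ha⟩) 1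

/-- `mul` realizes the crossed Burnside multiplication: for all pairs `(K, b)`,
`(H, a)` and every set `R` of representatives of the double cosets `K\G/H`,
`(K, b) · (H, a) = Σ_{g ∈ R} (K ∩ gHg⁻¹, b·gag⁻¹)`. -/
def IsXBMul (mul : XB k G →ₗ[k] XB k G →ₗ[k] XB k G) : Prop :=
  ∀ (K H : Subgroup G) (b a : G)
    (hb : b ∈ Subgroup.centralizer (K : Set G))
    (ha : a ∈ Subgroup.centralizer (H : Set G))
    (R : Finset G),
    (∀ x : G, ∃! r, r ∈ R ∧ x ∈ DoubleCoset.doubleCoset r (K : Set G) (H : Set G)) →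
    mul (basisElt k K b hb) (basisElt k H a ha) =
      ∑ g ∈ R,
        basisElt k (K ⊓ Subgroup.map (MulAut.conj g).toMonoidHom H)
          (b * (g * a * g⁻¹)) (centralizer_aux hb ha)


/-!
`ρ(H, a)` is the sum of the conjugates `x a x⁻¹` over the cosets `xH ∈ G/H`. It depends only on
the conjugacy class of the pair, and reindexing along left translations shows that it is central.
Multiplicativity is Mackey's formula: for double coset representatives `g ∈ K\G/H`, the maps
`x(K ∩ gHg⁻¹) ↦ (xK, xgH)` together form a bijection onto `G/K × G/H`, and at `(xK, xgH)` the
product of the two conjugates `xbx⁻¹ · (xg)a(xg)⁻¹` is the conjugate `x (b·gag⁻¹) x⁻¹`.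
Finally `ρ(C_G(a), a)` is the class sum of `a`, and a central element is the combination of the
class sums weighted by its coefficients, which are constant on conjugacy classes.
-/

open scoped Classical

theorem mem_map_conj_iff {H : Subgroup G} {g z : G} :
    z ∈ H.map (MulAut.conj g).toMonoidHom ↔ g⁻¹ * z * g ∈ H := by
  rw [Subgroup.mem_map_equiv, MulAut.conj_symm_apply]

theorem exists_finset_transversal {α : Type*} [Fintype α] (s : Setoid α) :
    ∃ R : Finset α, ∀ x, ∃! r, r ∈ R ∧ s r x := by
  refine ⟨Finset.univ.image Quotient.out, fun x => ⟨(⟦x⟧ : Quotient s).out,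
    ⟨Finset.mem_image_of_mem _ (Finset.mem_univ _), Quotient.mk_out x⟩, ?_⟩⟩
  rintro r ⟨hr, hrx⟩
  obtain ⟨q, -, rfl⟩ := Finset.mem_image.mp hr
  rw [← Quotient.sound hrx, Quotient.out_eq]

section Cosets

variable {K H : Subgroup G} {a b : G}

def cosetConj (ha : a ∈ Subgroup.centralizer (H : Set G)) : G ⧸ H → G :=
  Quotient.lift (fun x => x * a * x⁻¹) fun x y hxy => by
    obtain ⟨h, hh, rfl⟩ : ∃ h ∈ H, y = x * h :=
      ⟨x⁻¹ * y, QuotientGroup.leftRel_apply.mp hxy, by group⟩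
    have hha : h * a = a * h := ha h hh
    calc x * a * x⁻¹ = x * (a * h) * h⁻¹ * x⁻¹ := by group
      _ = x * h * a * (x * h)⁻¹ := by rw [← hha]; group

@[simp]
theorem cosetConj_mk (ha : a ∈ Subgroup.centralizer (H : Set G)) (x : G) :
    cosetConj ha (x : G ⧸ H) = x * a * x⁻¹ :=
  rfl

theorem cosetConj_smul (ha : a ∈ Subgroup.centralizer (H : Set G)) (g : G) (q : G ⧸ H) :
    cosetConj ha (g • q) = g * cosetConj ha q * g⁻¹ := by
  induction q using QuotientGroup.induction_on with
  | H x => simp only [MulAction.Quotient.smul_coe, smul_eq_mul, cosetConj_mk]; group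

def quotientMapConjEquiv (H : Subgroup G) (g : G) :
    G ⧸ H ≃ G ⧸ H.map (MulAut.conj g).toMonoidHom :=
  Quotient.congr (Equiv.mulRight g⁻¹) fun x y => by
    rw [QuotientGroup.leftRel_apply, QuotientGroup.leftRel_apply, mem_map_conj_iff]
    simp [mul_assoc]

theorem cosetConj_quotientMapConjEquiv (ha : a ∈ Subgroup.centralizer (H : Set G)) {g : G}
    (hga : g * a * g⁻¹ ∈
      Subgroup.centralizer (H.map (MulAut.conj g).toMonoidHom : Set G)) (q : G ⧸ H) :
    cosetConj hga (quotientMapConjEquiv H g q) = cosetConj ha q := by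
  induction q using QuotientGroup.induction_on with
  | H x => show x * g⁻¹ * (g * a * g⁻¹) * (x * g⁻¹)⁻¹ = x * a * x⁻¹; group

theorem sum_quotient_eq_sum_of_transversal {M : Type*} [AddCommMonoid M] [Fintype (G ⧸ H)]
    (R : Finset G) (hR : ∀ g : G, ∃! r, r ∈ R ∧ g⁻¹ * r ∈ H) (f : G ⧸ H → M) :
    ∑ q, f q = ∑ r ∈ R, f r := by
  have hRH : Subgroup.IsComplement (R : Set G) H :=
    Subgroup.isComplement_iff_existsUnique_inv_mul_mem.mpr fun g => by
      obtain ⟨r, ⟨hr, hgr⟩, huniq⟩ := hR g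
      refine ⟨⟨r, hr⟩, by simpa using H.inv_mem hgr, fun s hs => Subtype.ext ?_⟩
      exact huniq s ⟨s.2, by simpa using H.inv_mem hs⟩
  rw [← Finset.sum_coe_sort R]
  exact Fintype.sum_equiv hRH.leftQuotientEquiv _ _ fun q =>
    congrArg f (hRH.quotientGroupMk_leftQuotientEquiv q).symm

def mackeyMap (K H : Subgroup G) (g : G) :
    G ⧸ (K ⊓ H.map (MulAut.conj g).toMonoidHom : Subgroup G) → (G ⧸ K) × (G ⧸ H) :=
  Quotient.lift (fun x => ((x : G ⧸ K), ((x * g : G) : G ⧸ H))) fun x y hxy => by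
    obtain ⟨hK, hH⟩ := Subgroup.mem_inf.mp (QuotientGroup.leftRel_apply.mp hxy)
    rw [mem_map_conj_iff] at hH
    refine Prod.ext (QuotientGroup.eq.mpr hK) (QuotientGroup.eq.mpr ?_)
    simpa [mul_assoc] using hH

theorem cosetConj_mul_cosetConj_mackeyMap (hb : b ∈ Subgroup.centralizer (K : Set G))
    (ha : a ∈ Subgroup.centralizer (H : Set G)) (g : G)
    (q : G ⧸ (K ⊓ H.map (MulAut.conj g).toMonoidHom : Subgroup G)) :
    cosetConj hb (mackeyMap K H g q).1 * cosetConj ha (mackeyMap K H g q).2 =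
      cosetConj (centralizer_aux hb ha) q := by
  induction q using QuotientGroup.induction_on with
  | H x => show x * b * x⁻¹ * (x * g * a * (x * g)⁻¹) = x * (b * (g * a * g⁻¹)) * x⁻¹; group

theorem mackeyMap_bijective (R : Finset G)
    (hR : ∀ x : G, ∃! r, r ∈ R ∧ x ∈ DoubleCoset.doubleCoset r (K : Set G) (H : Set G)) :
    Function.Bijective
      fun s : (Σ g : R, G ⧸ (K ⊓ H.map (MulAut.conj g.1).toMonoidHom : Subgroup G)) =>
        mackeyMap K H s.1 s.2 := by
  constructor
  · rintro ⟨⟨g, hg⟩, q⟩ ⟨⟨g', hg'⟩, q'⟩ hqq'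
    induction q using QuotientGroup.induction_on with | H x =>
    induction q' using QuotientGroup.induction_on with | H x' =>
    obtain ⟨hK, hH⟩ := Prod.ext_iff.mp hqq'
    replace hK : x⁻¹ * x' ∈ K := QuotientGroup.eq.mp hK
    replace hH : (x * g)⁻¹ * (x' * g') ∈ H := QuotientGroup.eq.mp hH
    obtain rfl : g = g' := (hR g').unique ⟨hg, DoubleCoset.mem_doubleCoset.mpr
      ⟨_, K.inv_mem hK, _, hH, by group⟩⟩ ⟨hg', DoubleCoset.mem_doubleCoset_self K H g'⟩
    refine congrArg (Sigma.mk _) (QuotientGroup.eq.mpr ⟨hK, mem_map_conj_iff.mpr ?_⟩)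
    simpa [mul_assoc] using hH
  · rintro ⟨y, z⟩
    induction y using QuotientGroup.induction_on with | H y =>
    induction z using QuotientGroup.induction_on with | H z =>
    obtain ⟨g, ⟨hg, hyz⟩, -⟩ := hR (y⁻¹ * z)
    obtain ⟨c, hc, h, hh, hcgh⟩ := DoubleCoset.mem_doubleCoset.mp hyz
    refine ⟨⟨⟨g, hg⟩, ((y * c : G) : G ⧸ _)⟩, Prod.ext ?_ ?_⟩
    · exact QuotientGroup.eq.mpr (by simpa using K.inv_mem hc)
    · refine QuotientGroup.eq.mpr ?_
      rw [show z = y * (c * g * h) by rw [← hcgh]; group]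
      simpa [mul_assoc] using hh

theorem exists_doubleCoset_transversal [Fintype G] (K H : Subgroup G) :
    ∃ R : Finset G,
      ∀ x : G, ∃! r, r ∈ R ∧ x ∈ DoubleCoset.doubleCoset r (K : Set G) (H : Set G) := by
  obtain ⟨R, hR⟩ := exists_finset_transversal (DoubleCoset.setoid (K : Set G) H)
  refine ⟨R, fun x => ?_⟩
  simpa only [DoubleCoset.rel_iff, DoubleCoset.mem_doubleCoset, SetLike.mem_coe] using hR x

end Cosets

theorem mem_centralizer_centralizer_singleton (a : G) :
    a ∈ Subgroup.centralizer (Subgroup.centralizer {a} : Set G) :=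
  Set.subset_centralizer_centralizer rfl

theorem coeff_eq_of_isConj_of_mem_center {z : MonoidAlgebra k G}
    (hz : z ∈ Subalgebra.center k (MonoidAlgebra k G)) {a b : G} (hab : IsConj a b) :
    z.coeff a = z.coeff b := by
  obtain ⟨x, rfl⟩ := isConj_iff.mp hab
  have hx := congrArg (fun w => w.coeff (x * a))
    (Subalgebra.mem_center_iff.mp hz (MonoidAlgebra.single x 1))
  simpa [mul_assoc] using hx

section Rho

variable (k) [Fintype G] {K H : Subgroup G} {a b : G}

noncomputable def rhoPair (H : Subgroup G) (a : G) (ha : a ∈ Subgroup.centralizer (H : Set G)) :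
    MonoidAlgebra k G :=
  ∑ q : G ⧸ H, MonoidAlgebra.single (cosetConj ha q) 1

theorem rhoPair_map_conj (ha : a ∈ Subgroup.centralizer (H : Set G)) (g : G)
    (hga : g * a * g⁻¹ ∈ Subgroup.centralizer (H.map (MulAut.conj g).toMonoidHom : Set G)) :
    rhoPair k (H.map (MulAut.conj g).toMonoidHom) (g * a * g⁻¹) hga = rhoPair k H a ha :=
  (Fintype.sum_equiv (quotientMapConjEquiv H g) _ _ fun q => by
    rw [cosetConj_quotientMapConjEquiv ha hga]).symm

theorem rhoPair_respects_conjRel (p q : CPair G) (hpq : conjRel p q) :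
    rhoPair k p.1.1 p.1.2 p.2 = rhoPair k q.1.1 q.1.2 q.2 := by
  obtain ⟨⟨H, a⟩, ha⟩ := p
  obtain ⟨⟨_, _⟩, _⟩ := q
  obtain ⟨g, rfl, rfl⟩ := hpq
  exact (rhoPair_map_conj k ha g _).symm

noncomputable def rho : XB k G →ₗ[k] MonoidAlgebra k G :=
  Finsupp.linearCombination k
    (Quot.lift (fun p : CPair G => rhoPair k p.1.1 p.1.2 p.2) (rhoPair_respects_conjRel k))

theorem rho_basisElt (ha : a ∈ Subgroup.centralizer (H : Set G)) :
    rho k (basisElt k H a ha) = rhoPair k H a ha := by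
  rw [rho, basisElt, Finsupp.linearCombination_single, one_smul]

theorem rhoPair_eq_sum_of_transversal (ha : a ∈ Subgroup.centralizer (H : Set G))
    (R : Finset G) (hR : ∀ g : G, ∃! r, r ∈ R ∧ g⁻¹ * r ∈ H) :
    rhoPair k H a ha = ∑ x ∈ R, MonoidAlgebra.single (x * a * x⁻¹) (1 : k) :=
  sum_quotient_eq_sum_of_transversal R hR _

theorem rhoPair_mem_center (ha : a ∈ Subgroup.centralizer (H : Set G)) :
    rhoPair k H a ha ∈ Subalgebra.center k (MonoidAlgebra k G) := by
  refine Subalgebra.mem_center_iff.mpr fun z => ?_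
  induction z using MonoidAlgebra.induction_linear with
  | zero => rw [zero_mul, mul_zero]
  | add z w hz hw => rw [add_mul, mul_add, hz, hw]
  | single g r =>
    simp only [rhoPair, Finset.mul_sum, Finset.sum_mul, MonoidAlgebra.single_mul_single,
      mul_one, one_mul]
    refine Fintype.sum_bijective (g • ·) (MulAction.bijective g) _ _ fun q => ?_
    rw [cosetConj_smul, inv_mul_cancel_right]

theorem rho_mem_center (w : XB k G) : rho k w ∈ Subalgebra.center k (MonoidAlgebra k G) := by
  rw [rho, Finsupp.linearCombination_apply]
  refine Subalgebra.sum_mem _ fun p _ => Subalgebra.smul_mem _ ?_ _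
  induction p using Quot.ind with | mk p => exact rhoPair_mem_center k p.2

theorem rho_one : rho k (basisElt k (⊤ : Subgroup G) 1 one_mem_centralizer_top) = 1 := by
  rw [rho_basisElt, rhoPair_eq_sum_of_transversal k _ {1} fun _ => ⟨1, by simp, by simp⟩]
  simp [MonoidAlgebra.one_def]

theorem rhoPair_mul_rhoPair (hb : b ∈ Subgroup.centralizer (K : Set G))
    (ha : a ∈ Subgroup.centralizer (H : Set G)) (R : Finset G)
    (hR : ∀ x : G, ∃! r, r ∈ R ∧ x ∈ DoubleCoset.doubleCoset r (K : Set G) (H : Set G)) :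
    rhoPair k K b hb * rhoPair k H a ha =
      ∑ g ∈ R, rhoPair k (K ⊓ H.map (MulAut.conj g).toMonoidHom) (b * (g * a * g⁻¹))
        (centralizer_aux hb ha) := by
  simp only [rhoPair, Finset.sum_mul_sum, MonoidAlgebra.single_mul_single, mul_one]
  rw [← Fintype.sum_prod_type', ← Finset.sum_coe_sort R, ← Fintype.sum_sigma']
  exact (Fintype.sum_bijective _ (mackeyMap_bijective R hR) _ _ fun s => by
    rw [cosetConj_mul_cosetConj_mackeyMap]).symm

theorem rho_mul {mul : XB k G →ₗ[k] XB k G →ₗ[k] XB k G} (hmul : IsXBMul mul)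
    (x y : XB k G) : rho k (mul x y) = rho k x * rho k y := by
  suffices mul.compr₂ (rho k) = (LinearMap.mul k (MonoidAlgebra k G)).compl₁₂ (rho k) (rho k)
    from LinearMap.congr_fun₂ this x y
  refine Finsupp.lhom_ext' fun p => LinearMap.ext_ring <|
    Finsupp.lhom_ext' fun q => LinearMap.ext_ring ?_
  induction p using Quot.ind with | mk p =>
  induction q using Quot.ind with | mk q =>
  obtain ⟨⟨K, b⟩, hb⟩ := p
  obtain ⟨⟨H, a⟩, ha⟩ := q
  obtain ⟨R, hR⟩ := exists_doubleCoset_transversal K H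
  change rho k (mul (basisElt k K b hb) (basisElt k H a ha)) =
    rho k (basisElt k K b hb) * rho k (basisElt k H a ha)
  simp only [hmul K H b a hb ha R hR, map_sum, rho_basisElt, rhoPair_mul_rhoPair k hb ha R hR]

theorem rhoPair_centralizer_eq_sum_isConj (a : G) :
    rhoPair k _ a (mem_centralizer_centralizer_singleton a) =
      ∑ g ∈ Finset.univ.filter (IsConj a), MonoidAlgebra.single g 1 := by
  have hinj : Function.Injective (cosetConj (mem_centralizer_centralizer_singleton a)) := by
    intro q q'
    induction q using QuotientGroup.induction_on with | H x =>
    induction q' using QuotientGroup.induction_on with | H y =>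
    intro hxy
    rw [cosetConj_mk, cosetConj_mk] at hxy
    refine QuotientGroup.eq.mpr (Subgroup.mem_centralizer_singleton_iff.mpr ?_)
    calc x⁻¹ * y * a = x⁻¹ * (y * a * y⁻¹) * y := by group
      _ = a * (x⁻¹ * y) := by rw [← hxy]; group
  have himage : Finset.univ.image (cosetConj (mem_centralizer_centralizer_singleton a)) =
      Finset.univ.filter (IsConj a) := by
    ext g
    simp [isConj_iff, QuotientGroup.mk_surjective.exists]
  rw [rhoPair, ← himage, Finset.sum_image fun q _ q' _ h => hinj h]

theorem exists_rho_eq_of_mem_center {z : MonoidAlgebra k G}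
    (hz : z ∈ Subalgebra.center k (MonoidAlgebra k G)) : ∃ w, rho k w = z := by
  refine ⟨∑ c : ConjClasses G, z.coeff c.out •
    basisElt k _ c.out (mem_centralizer_centralizer_singleton c.out), ?_⟩
  calc rho k _ = ∑ c : ConjClasses G, ∑ g ∈ Finset.univ.filter (fun g => ConjClasses.mk g = c),
        MonoidAlgebra.single g (z.coeff g) := by
        simp only [map_sum, map_smul, rho_basisElt, rhoPair_centralizer_eq_sum_isConj,
          Finset.smul_sum, MonoidAlgebra.smul_single, smul_eq_mul, mul_one]
        refine Finset.sum_congr rfl fun c _ => ?_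
        have hc : ∀ g, IsConj c.out g ↔ ConjClasses.mk g = c := fun g => by
          rw [← ConjClasses.mk_eq_mk_iff_isConj, show ConjClasses.mk c.out = c from c.out_eq,
            eq_comm]
        refine Finset.sum_congr (by simp only [hc]) fun g hg => ?_
        rw [coeff_eq_of_isConj_of_mem_center hz ((hc g).mpr (Finset.mem_filter.mp hg).2)]
    _ = ∑ g, MonoidAlgebra.single g (z.coeff g) := Finset.sum_fiberwise _ _ _
    _ = z := (Finsupp.sum_fintype _ _ (by simp)).symm.trans (MonoidAlgebra.sum_coeff_single z)

end Rho

theorem statement8 (k G : Type) [CommRing k] [Group G] [Fintype G]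
    (mul : XB k G →ₗ[k] XB k G →ₗ[k] XB k G) (hmul : IsXBMul mul) :
    ∃ ρ : XB k G →ₗ[k] MonoidAlgebra k G,
      -- the defining formula, for every choice of pair representative and of
      -- left coset representatives:
      (∀ (H : Subgroup G) (a : G) (ha : a ∈ Subgroup.centralizer (H : Set G))
        (R : Finset G), (∀ g : G, ∃! r, r ∈ R ∧ g⁻¹ * r ∈ H) →
        ρ (basisElt k H a ha) =
          ∑ x ∈ R, MonoidAlgebra.single (x * a * x⁻¹) (1 : k)) ∧
      -- `ρ` lands in the center:
      (∀ w : XB k G, ρ w ∈ Subalgebra.center k (MonoidAlgebra k G)) ∧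
      -- `ρ` is unital and multiplicative:
      (ρ (basisElt k ⊤ 1 one_mem_centralizer_top) = 1) ∧
      (∀ x y : XB k G, ρ (mul x y) = ρ x * ρ y) ∧
      -- `ρ` is surjective onto the center:
      (∀ z ∈ Subalgebra.center k (MonoidAlgebra k G), ∃ w : XB k G, ρ w = z) :=
  ⟨rho k,
    fun _ _ ha R hR => (rho_basisElt k ha).trans (rhoPair_eq_sum_of_transversal k ha R hR),
    rho_mem_center k, rho_one k, rho_mul k hmul, fun _ hz => exists_rho_eq_of_mem_center k hz⟩

end CrossedBurnside
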